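/- Let R be a commutative ring, c₁, c₂, c₃ ∈ R, and let Q be the associated cubic form. An element x ∈ R³ has an inverse under ⊕ (with identity (1,0,0)) if and only if Q(x) is a unit in R. Consequently, ({x ∈ R³ : Q(x) ∈ R*}, ⊕) is an abelian group. -/

import Mathlib

/-- The group law `⊕` on `F³` (encoded as `F × F × F`). -/
def oplus {F : Type*} [CommRing F] (c₁ c₂ c₃ : F) (x y : F × F × F) : F × F × F :=
  ⟨x.1 * y.1 + c₃ * (x.2.1 * y.2.2 + x.2.2 * y.2.1) + c₁ * c₃ * (x.2.2 * y.2.2),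
   x.1 * y.2.1 + x.2.1 * y.1 + c₂ * (x.2.1 * y.2.2 + x.2.2 * y.2.1)
     + (c₁ * c₂ + c₃) * (x.2.2 * y.2.2),
   x.2.1 * y.2.1 + x.1 * y.2.2 + x.2.2 * y.1 + c₁ * (x.2.1 * y.2.2 + x.2.2 * y.2.1)
     + (c₁ ^ 2 + c₂) * (x.2.2 * y.2.2)⟩

/-- The cubic form `Q`. -/
def Qf {F : Type*} [CommRing F] (c₁ c₂ c₃ : F) (x : F × F × F) : F :=
  -c₂ * x.1 * x.2.1 ^ 2 + (c₂ ^ 2 - 2 * (c₁ * c₃)) * x.1 * x.2.2 ^ 2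
    + c₁ * x.1 ^ 2 * x.2.1 + (c₁ ^ 2 + 2 * c₂) * x.1 ^ 2 * x.2.2
    - (c₂ * c₃) * x.2.1 * x.2.2 ^ 2 + (c₁ * c₃) * x.2.1 ^ 2 * x.2.2
    - (c₁ * c₂ + 3 * c₃) * x.1 * x.2.1 * x.2.2
    + x.1 ^ 3 + c₃ * x.2.1 ^ 3 + c₃ ^ 2 * x.2.2 ^ 3

/-- `n`-fold `⊕`-power. -/
def opow {F : Type*} [CommRing F] (c₁ c₂ c₃ : F) : ℕ → F × F × F → F × F × F
  | 0, _ => (1, 0, 0)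
  | n + 1, x => oplus c₁ c₂ c₃ x (opow c₁ c₂ c₃ n x)

/-!
In the basis `1, t, t²`, `⊕` is multiplication in the cubic algebra `R[t]/(t³ - c₁t² - c₂t - c₃)`,
so it is commutative and associative with unit `(1, 0, 0)`, and `Q(x)` is the determinant of
multiplication by `x`, hence multiplicative. If `x ⊕ y = 1` then `Q(x) Q(y) = 1`; conversely the
adjugate of that multiplication matrix gives `x ⊕ oplusAdj x = (Q(x), 0, 0)`, so
`Q(x)⁻¹ • oplusAdj x` is an inverse of `x`.
-/

section CubicLaw

variable {R : Type*} [CommRing R] (c₁ c₂ c₃ : R)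

lemma Qf_oplus (x y : R × R × R) :
    Qf c₁ c₂ c₃ (oplus c₁ c₂ c₃ x y) = Qf c₁ c₂ c₃ x * Qf c₁ c₂ c₃ y := by
  simp only [Qf, oplus]
  ring

lemma Qf_one : Qf c₁ c₂ c₃ ((1 : R), (0 : R), (0 : R)) = 1 := by
  simp only [Qf]
  ring

lemma oplus_comm (x y : R × R × R) : oplus c₁ c₂ c₃ x y = oplus c₁ c₂ c₃ y x := by
  simp only [oplus, Prod.mk.injEq]
  refine ⟨by ring, by ring, by ring⟩

lemma oplus_assoc (x y z : R × R × R) :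
    oplus c₁ c₂ c₃ (oplus c₁ c₂ c₃ x y) z = oplus c₁ c₂ c₃ x (oplus c₁ c₂ c₃ y z) := by
  simp only [oplus, Prod.mk.injEq]
  refine ⟨by ring, by ring, by ring⟩

lemma one_oplus (x : R × R × R) : oplus c₁ c₂ c₃ ((1 : R), (0 : R), (0 : R)) x = x := by
  simp [oplus]

lemma oplus_smul (r : R) (x y : R × R × R) :
    oplus c₁ c₂ c₃ x (r • y) = r • oplus c₁ c₂ c₃ x y := by
  simp only [oplus, Prod.smul_mk, Prod.smul_fst, Prod.smul_snd, smul_eq_mul, Prod.mk.injEq]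
  refine ⟨by ring, by ring, by ring⟩

/-- The adjugate of the matrix of `y ↦ x ⊕ y`, read off as the first column. -/
def oplusAdj (x : R × R × R) : R × R × R :=
  ((x.1 + c₂ * x.2.2) * (x.1 + c₁ * x.2.1 + (c₁ ^ 2 + c₂) * x.2.2)
      - (c₂ * x.2.1 + (c₁ * c₂ + c₃) * x.2.2) * (x.2.1 + c₁ * x.2.2),
    (c₂ * x.2.1 + (c₁ * c₂ + c₃) * x.2.2) * x.2.2
      - x.2.1 * (x.1 + c₁ * x.2.1 + (c₁ ^ 2 + c₂) * x.2.2),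
    x.2.1 * (x.2.1 + c₁ * x.2.2) - (x.1 + c₂ * x.2.2) * x.2.2)

lemma oplus_oplusAdj (x : R × R × R) :
    oplus c₁ c₂ c₃ x (oplusAdj c₁ c₂ c₃ x) = (Qf c₁ c₂ c₃ x, (0 : R), (0 : R)) := by
  simp only [oplus, oplusAdj, Qf, Prod.mk.injEq]
  refine ⟨by ring, by ring, by ring⟩

lemma isUnit_Qf_of_oplus_eq_one {x y : R × R × R}
    (h : oplus c₁ c₂ c₃ x y = ((1 : R), (0 : R), (0 : R))) :
    IsUnit (Qf c₁ c₂ c₃ x) := by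
  have hQ := Qf_oplus c₁ c₂ c₃ x y
  rw [h, Qf_one] at hQ
  exact .of_mul_eq_one _ hQ.symm

lemma exists_oplus_eq_one_of_isUnit {x : R × R × R} (hx : IsUnit (Qf c₁ c₂ c₃ x)) :
    ∃ y, oplus c₁ c₂ c₃ x y = ((1 : R), (0 : R), (0 : R)) := by
  obtain ⟨u, hu⟩ := hx
  refine ⟨(↑u⁻¹ : R) • oplusAdj c₁ c₂ c₃ x, ?_⟩
  rw [oplus_smul, oplus_oplusAdj, ← hu]
  simp

end CubicLaw

/-- Over a commutative ring `R`, `x` is `⊕`-invertible iff `Q(x)` is a unit; consequently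
`({x : R³ | Q(x) ∈ R*}, ⊕)` is an abelian group. -/
theorem stmt19 {R : Type*} [CommRing R] (c₁ c₂ c₃ : R) :
    (∀ x : R × R × R,
      (∃ y : R × R × R, oplus c₁ c₂ c₃ x y = ((1 : R), (0 : R), (0 : R)) ∧
          oplus c₁ c₂ c₃ y x = ((1 : R), (0 : R), (0 : R))) ↔
        IsUnit (Qf c₁ c₂ c₃ x)) ∧
    (∀ x y : R × R × R, IsUnit (Qf c₁ c₂ c₃ x) → IsUnit (Qf c₁ c₂ c₃ y) →
        IsUnit (Qf c₁ c₂ c₃ (oplus c₁ c₂ c₃ x y))) ∧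
    (∀ x y z : R × R × R,
        oplus c₁ c₂ c₃ (oplus c₁ c₂ c₃ x y) z = oplus c₁ c₂ c₃ x (oplus c₁ c₂ c₃ y z)) ∧
    (∀ x y : R × R × R, oplus c₁ c₂ c₃ x y = oplus c₁ c₂ c₃ y x) ∧
    IsUnit (Qf c₁ c₂ c₃ ((1 : R), (0 : R), (0 : R))) ∧
    (∀ x : R × R × R, oplus c₁ c₂ c₃ ((1 : R), (0 : R), (0 : R)) x = x) ∧
    (∀ x : R × R × R, IsUnit (Qf c₁ c₂ c₃ x) →
        ∃ y : R × R × R, IsUnit (Qf c₁ c₂ c₃ y) ∧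
          oplus c₁ c₂ c₃ x y = ((1 : R), (0 : R), (0 : R))) := by
  have inverse_iff : ∀ x : R × R × R,
      (∃ y, oplus c₁ c₂ c₃ x y = ((1 : R), (0 : R), (0 : R)) ∧
          oplus c₁ c₂ c₃ y x = ((1 : R), (0 : R), (0 : R))) ↔
        IsUnit (Qf c₁ c₂ c₃ x) := fun x =>
    ⟨fun ⟨_, hy, _⟩ => isUnit_Qf_of_oplus_eq_one c₁ c₂ c₃ hy, fun hx =>
      let ⟨y, hy⟩ := exists_oplus_eq_one_of_isUnit c₁ c₂ c₃ hx
      ⟨y, hy, (oplus_comm c₁ c₂ c₃ y x).trans hy⟩⟩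
  refine ⟨inverse_iff, fun x y hx hy => ?_, oplus_assoc c₁ c₂ c₃, oplus_comm c₁ c₂ c₃,
    by simp [Qf_one], one_oplus c₁ c₂ c₃, fun x hx => ?_⟩
  · rw [Qf_oplus]
    exact hx.mul hy
  · obtain ⟨y, hy⟩ := exists_oplus_eq_one_of_isUnit c₁ c₂ c₃ hx
    refine ⟨y, ?_, hy⟩
    rw [oplus_comm] at hy
    exact isUnit_Qf_of_oplus_eq_one c₁ c₂ c₃ hy
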